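/- For kappa > 0 and mu > 0 sufficiently small, lambda_mu^-(0) = 0, and for all real K: 0 ≤ lambda_mu^-(K) ≤ lambda_mu^-(pi) < kappa(1+mu) = lambda_mu^+(0) < lambda_mu^+(K) (for K not a multiple of 2 pi) ≤ lambda_mu^+(pi), where lambda_mu^{pm}(K) = kappa/2 + mu(kappa/2 + 1 - cos K) ± sqrt(P_mu(cos K))/2 and P_mu(t) = (kappa-2t+2)^2 mu^2 + 2 kappa(kappa+2t-2) mu + kappa^2. -/

import Mathlib

noncomputable def Pmu (κ μ t : ℝ) : ℝ :=
  (κ - 2*t + 2)^2 * μ^2 + 2*κ*(κ + 2*t - 2)*μ + κ^2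

noncomputable def lamMinus (κ μ K : ℝ) : ℝ :=
  κ/2 + μ*(κ/2 + 1 - Real.cos K) - Real.sqrt (Pmu κ μ (Real.cos K)) / 2

noncomputable def lamPlus (κ μ K : ℝ) : ℝ :=
  κ/2 + μ*(κ/2 + 1 - Real.cos K) + Real.sqrt (Pmu κ μ (Real.cos K)) / 2

/-!
Writing `q(c) = 2μc + κ - (κ + 2)μ`, one has `P_μ(c) = q(c)² + 4κ²μ`. Since `t ↦ √(t² + a)` is
1-Lipschitz, and strictly contracting when `a > 0`, the function `c ↦ √P_μ(c)` is `2μ`-Lipschitz,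
strictly so for `κ ≠ 0`. Hence `λ^±_μ(K) = κ/2 + μ(κ/2 + 1) - μ cos K ± √P_μ(cos K)/2` are both
non-increasing functions of `cos K`, `λ^+_μ` strictly, for every `μ > 0`; the bounds are their
values at `cos K = 1` and `cos K = -1`.
-/

open Real

theorem abs_sqrt_sq_add_sub_sqrt_sq_add_le {a : ℝ} (ha : 0 ≤ a) (x y : ℝ) :
    |√(x ^ 2 + a) - √(y ^ 2 + a)| ≤ |x - y| := by
  have hx := sq_sqrt (by positivity : 0 ≤ x ^ 2 + a)
  have hy := sq_sqrt (by positivity : 0 ≤ y ^ 2 + a)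
  have hxy : |x * y + a| ≤ √(x ^ 2 + a) * √(y ^ 2 + a) := by
    rw [← sqrt_mul (by positivity)]
    exact abs_le_sqrt (by nlinarith [sq_nonneg (x - y)])
  rw [← sq_le_sq]
  nlinarith [le_abs_self (x * y + a)]

theorem abs_sqrt_sq_add_sub_sqrt_sq_add_lt {a : ℝ} (ha : 0 < a) {x y : ℝ} (hxy : x ≠ y) :
    |√(x ^ 2 + a) - √(y ^ 2 + a)| < |x - y| := by
  have hx : |x| < √(x ^ 2 + a) := by
    rw [← sqrt_sq_eq_abs]; exact sqrt_lt_sqrt (sq_nonneg x) (by linarith)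
  have hy : |y| < √(y ^ 2 + a) := by
    rw [← sqrt_sq_eq_abs]; exact sqrt_lt_sqrt (sq_nonneg y) (by linarith)
  have hsum : 0 < √(x ^ 2 + a) + √(y ^ 2 + a) := by linarith [abs_nonneg x, abs_nonneg y]
  have hdiff : (√(x ^ 2 + a) - √(y ^ 2 + a)) * (√(x ^ 2 + a) + √(y ^ 2 + a))
      = (x - y) * (x + y) := by
    linear_combination sq_sqrt (by positivity : 0 ≤ x ^ 2 + a) -
      sq_sqrt (by positivity : 0 ≤ y ^ 2 + a)
  have hpos : 0 < |x - y| := abs_pos.mpr (sub_ne_zero.mpr hxy)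
  refine lt_of_mul_lt_mul_right ?_ hsum.le
  calc |√(x ^ 2 + a) - √(y ^ 2 + a)| * (√(x ^ 2 + a) + √(y ^ 2 + a))
      = |x - y| * |x + y| := by rw [← abs_mul, ← hdiff, abs_mul, abs_of_pos hsum]
    _ ≤ |x - y| * (|x| + |y|) := by gcongr; exact abs_add_le x y
    _ < |x - y| * (√(x ^ 2 + a) + √(y ^ 2 + a)) := by gcongr

def qmu (κ μ c : ℝ) : ℝ := 2 * μ * c + κ - (κ + 2) * μ

theorem qmu_sub (κ μ c₁ c₂ : ℝ) : qmu κ μ c₁ - qmu κ μ c₂ = 2 * μ * (c₁ - c₂) := by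
  unfold qmu; ring

theorem Pmu_eq_sq_add (κ μ c : ℝ) :
    Pmu κ μ c = qmu κ μ c ^ 2 + 4 * κ ^ 2 * μ := by
  unfold Pmu qmu; ring

section Dispersion

variable {κ μ : ℝ}

theorem abs_sqrt_Pmu_sub_le (hμ : 0 ≤ μ) (c₁ c₂ : ℝ) :
    |√(Pmu κ μ c₁) - √(Pmu κ μ c₂)| ≤ 2 * μ * |c₁ - c₂| := by
  rw [Pmu_eq_sq_add, Pmu_eq_sq_add]
  calc _ ≤ |qmu κ μ c₁ - qmu κ μ c₂| :=
        abs_sqrt_sq_add_sub_sqrt_sq_add_le (by positivity) _ _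
    _ = 2 * μ * |c₁ - c₂| := by
      rw [qmu_sub, abs_mul, abs_of_nonneg (by positivity : (0 : ℝ) ≤ 2 * μ)]

theorem abs_sqrt_Pmu_sub_lt (hκ : κ ≠ 0) (hμ : 0 < μ) {c₁ c₂ : ℝ} (h : c₁ ≠ c₂) :
    |√(Pmu κ μ c₁) - √(Pmu κ μ c₂)| < 2 * μ * |c₁ - c₂| := by
  rw [Pmu_eq_sq_add, Pmu_eq_sq_add]
  calc _ < |qmu κ μ c₁ - qmu κ μ c₂| :=
        abs_sqrt_sq_add_sub_sqrt_sq_add_lt (by positivity) (by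
          rw [← sub_ne_zero, qmu_sub]; exact mul_ne_zero (by positivity) (sub_ne_zero.mpr h))
    _ = 2 * μ * |c₁ - c₂| := by
      rw [qmu_sub, abs_mul, abs_of_nonneg (by positivity : (0 : ℝ) ≤ 2 * μ)]

theorem sqrt_Pmu_one (h : 0 ≤ κ * (1 + μ)) : √(Pmu κ μ 1) = κ * (1 + μ) := by
  rw [show Pmu κ μ 1 = (κ * (1 + μ)) ^ 2 by unfold Pmu; ring, sqrt_sq h]

theorem lamMinus_zero (h : 0 ≤ κ * (1 + μ)) : lamMinus κ μ 0 = 0 := by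
  rw [lamMinus, cos_zero, sqrt_Pmu_one h]; ring

theorem lamPlus_zero (h : 0 ≤ κ * (1 + μ)) : lamPlus κ μ 0 = κ * (1 + μ) := by
  rw [lamPlus, cos_zero, sqrt_Pmu_one h]; ring

theorem lamMinus_le_of_cos_le (hμ : 0 ≤ μ) {K K' : ℝ} (h : cos K ≤ cos K') :
    lamMinus κ μ K' ≤ lamMinus κ μ K := by
  have hlip := abs_sqrt_Pmu_sub_le (κ := κ) hμ (cos K) (cos K')
  rw [abs_of_nonpos (sub_nonpos.mpr h)] at hlip
  unfold lamMinus
  linarith [le_abs_self (√(Pmu κ μ (cos K)) - √(Pmu κ μ (cos K')))]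

theorem lamPlus_le_of_cos_le (hμ : 0 ≤ μ) {K K' : ℝ} (h : cos K ≤ cos K') :
    lamPlus κ μ K' ≤ lamPlus κ μ K := by
  have hlip := abs_sqrt_Pmu_sub_le (κ := κ) hμ (cos K') (cos K)
  rw [abs_of_nonneg (sub_nonneg.mpr h)] at hlip
  unfold lamPlus
  linarith [le_abs_self (√(Pmu κ μ (cos K')) - √(Pmu κ μ (cos K)))]

theorem lamPlus_lt_of_cos_lt (hκ : κ ≠ 0) (hμ : 0 < μ) {K K' : ℝ} (h : cos K < cos K') :
    lamPlus κ μ K' < lamPlus κ μ K := by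
  have hlip := abs_sqrt_Pmu_sub_lt hκ hμ h.ne'
  rw [abs_of_pos (sub_pos.mpr h)] at hlip
  unfold lamPlus
  linarith [le_abs_self (√(Pmu κ μ (cos K')) - √(Pmu κ μ (cos K)))]

theorem lamMinus_pi_lt (hκ : 0 < κ) (hμ : 0 < μ) : lamMinus κ μ π < κ * (1 + μ) := by
  have hq : |qmu κ μ (-1)| ≤ √(Pmu κ μ (-1)) :=
    abs_le_sqrt (by rw [Pmu_eq_sq_add]; exact le_add_of_nonneg_right (by positivity))
  have hq₁ : qmu κ μ (-1) = κ - κ * μ - 4 * μ := by unfold qmu; ring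
  rw [lamMinus, cos_pi]
  linarith [neg_le_abs (qmu κ μ (-1)), mul_pos hκ hμ]

end Dispersion

theorem stmt3 (κ : ℝ) (hκ : 0 < κ) :
    ∃ μ₀ > 0, ∀ μ : ℝ, 0 < μ → μ < μ₀ →
      lamMinus κ μ 0 = 0 ∧
      (∀ K : ℝ, 0 ≤ lamMinus κ μ K ∧ lamMinus κ μ K ≤ lamMinus κ μ Real.pi) ∧
      lamMinus κ μ Real.pi < κ*(1+μ) ∧
      lamPlus κ μ 0 = κ*(1+μ) ∧
      (∀ K : ℝ, (¬ ∃ n : ℤ, K = 2*Real.pi*n) → lamPlus κ μ 0 < lamPlus κ μ K) ∧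
      (∀ K : ℝ, lamPlus κ μ K ≤ lamPlus κ μ Real.pi) := by
  refine ⟨1, one_pos, fun μ hμ _ => ?_⟩
  have hκμ : 0 ≤ κ * (1 + μ) := by positivity
  refine ⟨lamMinus_zero hκμ, fun K => ⟨?_, ?_⟩, lamMinus_pi_lt hκ hμ, lamPlus_zero hκμ,
    fun K hK => ?_, fun K => lamPlus_le_of_cos_le hμ.le (by rw [cos_pi]; exact neg_one_le_cos K)⟩
  · rw [← lamMinus_zero hκμ]
    exact lamMinus_le_of_cos_le hμ.le (by rw [cos_zero]; exact cos_le_one K)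
  · exact lamMinus_le_of_cos_le hμ.le (by rw [cos_pi]; exact neg_one_le_cos K)
  · have hcos : cos K ≠ 1 := fun h => by
      obtain ⟨n, hn⟩ := (cos_eq_one_iff K).mp h
      exact hK ⟨n, by rw [← hn]; ring⟩
    exact lamPlus_lt_of_cos_lt hκ.ne' hμ (by rw [cos_zero]; exact (cos_le_one K).lt_of_ne hcos)
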